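/- Let n, m, T be positive natural numbers, A an n×n real matrix, B an n×m real matrix, γ a real number, X an n×T real matrix, U an m×T real matrix, and X⁺ := A X + B U. Suppose the (n+m)×T matrix obtained by stacking X on top of U has rank n+m. Then for every m×n real matrix K (a linear feedback policy) and every x ∈ ℝⁿ there exists α ∈ ℝ^T such that x = X α, K x = U α, and H(x, K x) = (X α)(X α)^⊤ − γ (X⁺ α)(X⁺ α)^⊤, where H(x,u) = x x^⊤ − γ (A x + B u)(A x + B u)^⊤. -/
import Mathlib


open Matrix

lemma surj_of_rank {p q : ℕ} (M : Matrix (Fin p) (Fin q) ℝ) (h : M.rank = p) :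
    Function.Surjective M.mulVec := by
  rw [Matrix.rank] at h
  have : LinearMap.range M.mulVecLin = ⊤ :=
    Submodule.eq_top_of_finrank_eq (by simpa using h)
  intro y
  have := this ▸ Submodule.mem_top (x := y) (R := ℝ)
  obtain ⟨α, hα⟩ := LinearMap.mem_range.mp this
  exact ⟨α, hα⟩

/-- Constraint generation along a fixed linear feedback policy `u = Kx`:
under the full row rank assumption on `[X; U]`, for every `K` and `x` there is
`α` with `x = Xα`, `Kx = Uα`, and
`H(x,Kx) = (Xα)(Xα)᳔ − γ(X⁺α)(X⁺α)᳔` with `X⁺ = AX + BU`. -/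
theorem stmt_4 (n m T : ℕ) (hn : 0 < n) (hm : 0 < m) (hT : 0 < T)
    (A : Matrix (Fin n) (Fin n) ℝ) (B : Matrix (Fin n) (Fin m) ℝ) (γ : ℝ)
    (X : Matrix (Fin n) (Fin T) ℝ) (U : Matrix (Fin m) (Fin T) ℝ)
    (Xp : Matrix (Fin n) (Fin T) ℝ) (hXp : Xp = A * X + B * U)
    (hrank : (fromRows X U).rank = n + m) :
    ∀ (K : Matrix (Fin m) (Fin n) ℝ) (x : Fin n → ℝ), ∃ α : Fin T → ℝ,
      x = X *ᵥ α ∧ K *ᵥ x = U *ᵥ α ∧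
      vecMulVec x x - γ • vecMulVec (A *ᵥ x + B *ᵥ (K *ᵥ x)) (A *ᵥ x + B *ᵥ (K *ᵥ x)) =
        vecMulVec (X *ᵥ α) (X *ᵥ α) - γ • vecMulVec (Xp *ᵥ α) (Xp *ᵥ α) := by
  intro K x
  -- surjectivity of fromRows X U
  have hsurj : Function.Surjective (fromRows X U).mulVec := by
    have : (fromRows X U).rank = Fintype.card (Fin n ⊕ Fin m) := by
      simpa using hrank
    have hcast : Matrix (Fin n ⊕ Fin m) (Fin T) ℝ ≃ Matrix (Fin (n + m)) (Fin T) ℝ :=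
      (Matrix.reindexLinearEquiv ℝ ℝ (finSumFinEquiv) (Equiv.refl _)).toEquiv
    intro y
    -- use rank argument directly via range
    have hr : LinearMap.range (fromRows X U).mulVecLin = ⊤ := by
      apply Submodule.eq_top_of_finrank_eq
      rw [← Matrix.rank, hrank]
      simp [Module.finrank_pi]
    have := hr ▸ Submodule.mem_top (x := y) (R := ℝ)
    exact LinearMap.mem_range.mp this
  obtain ⟨α, hα⟩ := hsurj (Sum.elim x (K *ᵥ x))
  rw [fromRows_mulVec] at hα
  have hx : x = X *ᵥ α := by
    have := congrArg (fun f => f ∘ Sum.inl) hα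
    exact (funext_iff.mpr fun i => congrFun this i).symm
  have hu : K *ᵥ x = U *ᵥ α := by
    have := congrArg (fun f => f ∘ Sum.inr) hα
    exact (funext_iff.mpr fun i => congrFun this i).symm
  refine ⟨α, hx, hu, ?_⟩
  have hXpv : A *ᵥ x + B *ᵥ (K *ᵥ x) = Xp *ᵥ α := by
    rw [hXp, hu, hx, add_mulVec, mulVec_mulVec, mulVec_mulVec]
  rw [hXpv, ← hx]
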